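/- Define on $\mathbb{R}^2$ with coordinates $(u,v)$ the functions $A^1 = -\tfrac{2}{3}(c+\tfrac{3}{4})u^3 + uv$ and $A^2 = -\tfrac{1}{6}(c+1)(2c+1)u^4 + \tfrac{1}{2}v^2$, for a parameter $c \in \mathbb{R}$. Let $c^i_{jk} = \partial_j \partial_k A^i$ (with $\partial_1 = \partial_u$, $\partial_2 = \partial_v$). Then the bilinear product on $\mathbb{R}^2$ with structure constants $c^i_{jk}$ is commutative, associative, and has the vector $e = \partial_v$ (i.e. $e^1 = 0$, $e^2 = 1$) as a unit, at every point $(u,v)$. -/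
import Mathlib


/-- Partial derivative of a function of two real variables. -/
noncomputable def pd (j : Fin 2) (f : ℝ → ℝ → ℝ) : ℝ → ℝ → ℝ :=
  fun u v => if j = 0 then deriv (fun u' => f u' v) u else deriv (fun v' => f u v') v

/-- The vector potential of the `B₂` flat F-manifold family. -/
noncomputable def Apot (c : ℝ) : Fin 2 → ℝ → ℝ → ℝ :=
  fun i => if i = 0 then (fun u v => -(2/3) * (c + 3/4) * u ^ 3 + u * v)
           else (fun u v => -(1/6) * (c + 1) * (2 * c + 1) * u ^ 4 + (1/2) * v ^ 2)

/-- Structure constants `c^i_{jk} = ∂_j ∂_k A^i`. -/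
noncomputable def cstr (c : ℝ) (i j k : Fin 2) : ℝ → ℝ → ℝ := pd j (pd k (Apot c i))

/-- The product with structure constants `cstr` at the point `(u,v)`. -/
noncomputable def prodB2 (c u v : ℝ) (x y : Fin 2 → ℝ) : Fin 2 → ℝ :=
  fun i => ∑ j : Fin 2, ∑ k : Fin 2, cstr c i j k u v * x j * y k

lemma pdA00 (c u v : ℝ) : pd 0 (Apot c 0) u v = -(2) * (c + 3/4) * u ^ 2 + v := by
  show deriv (fun u' => -(2/3) * (c + 3/4) * u' ^ 3 + u' * v) u = _
  refine (HasDerivAt.deriv (((hasDerivAt_pow 3 u).const_mul (-(2/3) * (c + 3/4))).add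
    ((hasDerivAt_id u).mul_const v))).trans ?_
  push_cast; ring

lemma pdA01 (c u v : ℝ) : pd 1 (Apot c 0) u v = u := by
  show deriv (fun v' => -(2/3) * (c + 3/4) * u ^ 3 + u * v') v = _
  refine (HasDerivAt.deriv ((hasDerivAt_const v (-(2/3) * (c + 3/4) * u ^ 3)).add
    ((hasDerivAt_id v).const_mul u))).trans ?_
  ring

lemma pdA10 (c u v : ℝ) : pd 0 (Apot c 1) u v = -(2/3) * (c + 1) * (2 * c + 1) * u ^ 3 := by
  show deriv (fun u' => -(1/6) * (c + 1) * (2 * c + 1) * u' ^ 4 + (1/2) * v ^ 2) u = _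
  refine (HasDerivAt.deriv (((hasDerivAt_pow 4 u).const_mul (-(1/6) * (c + 1) * (2 * c + 1))).add
    (hasDerivAt_const u ((1/2) * v ^ 2)))).trans ?_
  push_cast; ring

lemma pdA11 (c u v : ℝ) : pd 1 (Apot c 1) u v = v := by
  show deriv (fun v' => -(1/6) * (c + 1) * (2 * c + 1) * u ^ 4 + (1/2) * v' ^ 2) v = _
  refine (HasDerivAt.deriv ((hasDerivAt_const v (-(1/6) * (c + 1) * (2 * c + 1) * u ^ 4)).add
    ((hasDerivAt_pow 2 v).const_mul (1/2)))).trans ?_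
  push_cast; ring

lemma c000 (c u v : ℝ) : cstr c 0 0 0 u v = -4 * (c + 3/4) * u := by
  show deriv (fun u' => pd 0 (Apot c 0) u' v) u = _
  simp only [pdA00]
  refine (HasDerivAt.deriv (((hasDerivAt_pow 2 u).const_mul (-(2) * (c + 3/4))).add
    (hasDerivAt_const u v))).trans ?_
  push_cast; ring

lemma c001 (c u v : ℝ) : cstr c 0 0 1 u v = 1 := by
  show deriv (fun u' => pd 1 (Apot c 0) u' v) u = _
  simp only [pdA01]; simp

lemma c010 (c u v : ℝ) : cstr c 0 1 0 u v = 1 := by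
  show deriv (fun v' => pd 0 (Apot c 0) u v') v = _
  simp only [pdA00]
  refine (HasDerivAt.deriv ((hasDerivAt_const v (-(2) * (c + 3/4) * u ^ 2)).add
    (hasDerivAt_id v))).trans ?_
  ring

lemma c011 (c u v : ℝ) : cstr c 0 1 1 u v = 0 := by
  show deriv (fun v' => pd 1 (Apot c 0) u v') v = _
  simp only [pdA01]; simp

lemma c100 (c u v : ℝ) : cstr c 1 0 0 u v = -2 * (c + 1) * (2 * c + 1) * u ^ 2 := by
  show deriv (fun u' => pd 0 (Apot c 1) u' v) u = _
  simp only [pdA10]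
  refine (HasDerivAt.deriv ((hasDerivAt_pow 3 u).const_mul
    (-(2/3) * (c + 1) * (2 * c + 1)))).trans ?_
  push_cast; ring

lemma c101 (c u v : ℝ) : cstr c 1 0 1 u v = 0 := by
  show deriv (fun u' => pd 1 (Apot c 1) u' v) u = _
  simp only [pdA11]; simp

lemma c110 (c u v : ℝ) : cstr c 1 1 0 u v = 0 := by
  show deriv (fun v' => pd 0 (Apot c 1) u v') v = _
  simp only [pdA10]; simp

lemma c111 (c u v : ℝ) : cstr c 1 1 1 u v = 1 := by
  show deriv (fun v' => pd 1 (Apot c 1) u v') v = _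
  simp only [pdA11]; simp

/-- The product defined by the Hessians of the `B₂` vector potential is
commutative, associative, and has `e = ∂_v` as unit, at every point. -/
theorem stmt3 (c u v : ℝ) :
    (∀ x y : Fin 2 → ℝ, prodB2 c u v x y = prodB2 c u v y x) ∧
    (∀ x y z : Fin 2 → ℝ,
      prodB2 c u v (prodB2 c u v x y) z = prodB2 c u v x (prodB2 c u v y z)) ∧
    (∀ x : Fin 2 → ℝ, prodB2 c u v ![0, 1] x = x) := by
  refine ⟨?_, ?_, ?_⟩ <;> intros <;> funext i <;> fin_cases i <;>
    simp only [prodB2, Fin.sum_univ_two, Fin.mk_zero, Fin.mk_one,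
      c000, c001, c010, c011, c100, c101, c110, c111,
      Matrix.cons_val_zero, Matrix.cons_val_one, Matrix.head_cons] <;> ring
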